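/- arXiv:0909.2430 — 2 statements merged into one kernel-verified Lean document; each statement's English description precedes it below -/
import Mathlib

section
/- Let G be a totally ordered abelian group and μ a finite subset of {g < 1}. Let A, B, C be nonzero grid-based series over G. If A ≺^μ B (every a ∈ supp A satisfies a ∈ b·μ⁺ for some b ∈ supp B), B ∼ C (mag B = mag C), and μ witnesses B (supp B ⊆ (mag B)·μ*), then A ≺^μ C. -/
/- Additive convention: magnitude of a Hahn series is `HahnSeries.order` (least exponent);
a monomial is small iff its exponent is positive; a ratio set is a finite set of
positive exponents. -/

/-- `μ⁺`: finite nonempty sums of elements of `s`. -/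
def addPlus {Γ : Type*} [AddCommMonoid Γ] (s : Set Γ) : Set Γ :=
  {x | ∃ a ∈ s, ∃ b ∈ AddSubmonoid.closure s, x = a + b}

/-- `A ≺^μ B`. -/
def hPrec {Γ : Type*} [AddCommGroup Γ] [LinearOrder Γ] [IsOrderedAddMonoid Γ] (μ : Set Γ)
    (A B : HahnSeries Γ ℝ) : Prop :=
  ∀ a ∈ A.support, ∃ b ∈ B.support, ∃ p ∈ addPlus μ, a = b + p

/-- `μ` witnesses `A`: `supp A ⊆ mag A + μ*`. -/
def hWitnesses {Γ : Type*} [AddCommGroup Γ] [LinearOrder Γ] [IsOrderedAddMonoid Γ] (μ : Set Γ)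
    (A : HahnSeries Γ ℝ) : Prop :=
  ∀ a ∈ A.support, ∃ p ∈ AddSubmonoid.closure μ, a = A.order + p

theorem HahnSeries.order_mem_support {Γ R : Type*} [Zero Γ] [LinearOrder Γ] [Zero R]
    {x : HahnSeries Γ R} (hx : x ≠ 0) : x.order ∈ x.support :=
  coeff_order_eq_zero.not.mpr hx

theorem add_mem_addPlus {Γ : Type*} [AddCommMonoid Γ] {s : Set Γ} {p q : Γ}
    (hq : q ∈ AddSubmonoid.closure s) (hp : p ∈ addPlus s) : q + p ∈ addPlus s := by
  obtain ⟨a, ha, b, hb, rfl⟩ := hp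
  exact ⟨a, ha, q + b, add_mem hq hb, by abel⟩

theorem hPrec.exists_eq_order_add {Γ : Type*} [AddCommGroup Γ] [LinearOrder Γ]
    [IsOrderedAddMonoid Γ] {μ : Set Γ} {A B : HahnSeries Γ ℝ} (hAB : hPrec μ A B)
    (hwit : hWitnesses μ B) : ∀ a ∈ A.support, ∃ p ∈ addPlus μ, a = B.order + p := by
  intro a ha
  obtain ⟨b, hb, p, hp, rfl⟩ := hAB a ha
  obtain ⟨q, hq, rfl⟩ := hwit b hb
  exact ⟨q + p, add_mem_addPlus hq hp, add_assoc _ _ _⟩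

theorem stmt15_general {Γ : Type*} [AddCommGroup Γ] [LinearOrder Γ] [IsOrderedAddMonoid Γ]
    (μ : Finset Γ)
    (A B C : HahnSeries Γ ℝ) (hC : C ≠ 0)
    (hAB : hPrec (μ : Set Γ) A B) (hmag : B.order = C.order)
    (hwit : hWitnesses (μ : Set Γ) B) :
    hPrec (μ : Set Γ) A C := by
  intro a ha
  obtain ⟨p, hp, rfl⟩ := hAB.exists_eq_order_add hwit a ha
  exact ⟨C.order, HahnSeries.order_mem_support hC, p, hp, by rw [hmag]⟩

/-- If `A ≺^μ B`, `B ∼ C` (same magnitude), and `μ` witnesses `B`, then `A ≺^μ C`. -/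
theorem stmt15 {Γ : Type*} [AddCommGroup Γ] [LinearOrder Γ] [IsOrderedAddMonoid Γ]
    (μ : Finset Γ) (hμ : ∀ x ∈ μ, 0 < x)
    (A B C : HahnSeries Γ ℝ) (hA : A ≠ 0) (hB : B ≠ 0) (hC : C ≠ 0)
    (hAB : hPrec (μ : Set Γ) A B) (hmag : B.order = C.order)
    (hwit : hWitnesses (μ : Set Γ) B) :
    hPrec (μ : Set Γ) A C :=
  stmt15_general μ A B C hC hAB hmag hwit
end

section
/- Let G be a totally ordered abelian group, μ a finite subset of {g < 1}, and A a nonzero Hahn series witnessed by μ, written A = a·g·(1+S) with a ∈ ℝ∖{0}, g = mag A, and supp S ⊆ μ⁺. Then for every b ∈ ℝ, the series A^b := a^b g^b ∑_{j≥0} C(b,j) S^j (binomial series, assuming a > 0 and that g^b makes sense, e.g. G divisible) is a well-defined Hahn series witnessed by μ, i.e., supp(A^b) ⊆ g^b·μ*. In particular the multiplicative inverse A^{-1} is witnessed by μ. -/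
/-- The generalized binomial coefficient `C(b, j)` for real `b`. -/
noncomputable def realChoose (b : ℝ) (j : ℕ) : ℝ :=
  (∏ i ∈ Finset.range j, (b - i)) / (j.factorial : ℝ)

/-! As the elements of `μ` are positive, `S` has positive order, so `S` can be substituted
into the binomial series `(1 + X) ^ b` (`PowerSeries.heval`). Each term `C(b, j) S ^ j` is
supported in the additive monoid generated by `supp S ⊆ μ⁺`, hence so is the sum. Substitution
is a ring homomorphism, so for `b = -1` the identity `(1 + X) (1 + X) ^ (-1) = 1` in `ℝ⟦X⟧`
yields the inverse. -/

lemma addPlus_subset_closure {Γ : Type*} [AddCommMonoid Γ] (s : Set Γ) :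
    addPlus s ⊆ AddSubmonoid.closure s := by
  rintro x ⟨a, ha, c, hc, rfl⟩
  exact add_mem (AddSubmonoid.subset_closure ha) hc

lemma pos_of_mem_addPlus {Γ : Type*} [AddCommMonoid Γ] [PartialOrder Γ] [IsOrderedAddMonoid Γ]
    {s : Set Γ} (hs : ∀ x ∈ s, 0 < x) {y : Γ} (hy : y ∈ addPlus s) : 0 < y := by
  obtain ⟨a, ha, c, hc, rfl⟩ := hy
  have hc : 0 ≤ c := by
    induction hc using AddSubmonoid.closure_induction with
    | mem x hx => exact (hs x hx).le
    | zero => exact le_rfl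
    | add x z _ _ hx hz => exact add_nonneg hx hz
  exact add_pos_of_pos_of_nonneg (hs a ha) hc

lemma realChoose_eq_ringChoose (b : ℝ) (j : ℕ) : realChoose b j = Ring.choose b j := by
  have h := Ring.descPochhammer_eq_factorial_smul_choose b j
  rw [← Polynomial.aeval_eq_smeval, Polynomial.aeval_def, Polynomial.eval₂_eq_eval_map,
    descPochhammer_map, descPochhammer_eval_eq_prod_range, nsmul_eq_mul] at h
  rw [realChoose, h, mul_div_cancel_left₀ _ (by positivity)]

namespace PowerSeries

lemma one_add_X_mul_binomialSeries_neg_one {R A : Type*} [CommRing R] [BinomialRing R]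
    [Ring A] [Algebra R A] : (1 + X) * binomialSeries A (-1 : R) = 1 := by
  have h := binomialSeries_nat (R := R) (A := A) 1
  rw [Nat.cast_one, pow_one] at h
  rw [← h, ← binomialSeries_add, add_neg_cancel, binomialSeries_zero]

end PowerSeries

open PowerSeries (X heval heval_mul heval_X coeff_heval)

namespace HahnSeries

lemma zero_lt_orderTop_of_forall_mem_support_pos {Γ R : Type*} [Zero Γ] [LinearOrder Γ] [Zero R]
    {x : HahnSeries Γ R} (h : ∀ g ∈ x.support, 0 < g) : 0 < x.orderTop := by
  rcases eq_or_ne x 0 with rfl | hx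
  · simp
  · rw [orderTop_of_ne_zero hx]
    exact WithTop.coe_pos.2 (h _ (x.isWF_support.min_mem _))

section HEval

variable {Γ R : Type*} [AddCommMonoid Γ] [LinearOrder Γ] [IsOrderedCancelAddMonoid Γ] [CommRing R]
  {x : HahnSeries Γ R}

lemma support_heval_subset_closure (hx : 0 < x.orderTop) (f : PowerSeries R) :
    (heval x f).support ⊆ AddSubmonoid.closure x.support := by
  refine SummableFamily.support_hsum_subset.trans (Set.iUnion_subset fun n => ?_)
  rw [SummableFamily.powerSeriesFamily_of_orderTop_pos hx]
  exact (support_smul_subset _ _).trans (SummableFamily.support_pow_subset_closure x n)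

lemma coeff_heval_eq_tsum [TopologicalSpace R] (hx : 0 < x.orderTop) (f : PowerSeries R) (g : Γ) :
    (heval x f).coeff g = ∑' n, f.coeff n * (x ^ n).coeff g := by
  have hfin := (SummableFamily.powerSeriesFamily x f).finite_co_support g
  simp only [SummableFamily.powerSeriesFamily_of_orderTop_pos hx, coeff_smul, smul_eq_mul]
    at hfin
  rw [coeff_heval, tsum_eq_finsum hfin]
  simp [SummableFamily.powerSeriesFamily_of_orderTop_pos hx]

end HEval

section BinomialPow

variable {Γ : Type*} [AddCommGroup Γ] [LinearOrder Γ] [IsOrderedAddMonoid Γ] [Module ℝ Γ]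
  {S : HahnSeries Γ ℝ}

/-- `(a g (1 + S)) ^ b` for the monomial `a g = single g a`, with `(1 + S) ^ b` the binomial series
evaluated at `S`. -/
noncomputable def binomialPow (a : ℝ) (g : Γ) (S : HahnSeries Γ ℝ) (b : ℝ) : HahnSeries Γ ℝ :=
  single (b • g) (a ^ b) * heval S (PowerSeries.binomialSeries ℝ b)

lemma coeff_binomialPow (hS : 0 < S.orderTop) (a : ℝ) (g : Γ) (b : ℝ) (x : Γ) :
    (binomialPow a g S b).coeff x =
      a ^ b * ∑' j, realChoose b j * (S ^ j).coeff (x - b • g) := by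
  rw [binomialPow, coeff_single_mul, coeff_heval_eq_tsum hS]
  simp [realChoose_eq_ringChoose]

lemma support_binomialPow_subset (hS : 0 < S.orderTop) (a : ℝ) (g : Γ) (b : ℝ) :
    (binomialPow a g S b).support ⊆
      {y | ∃ p ∈ AddSubmonoid.closure S.support, y = b • g + p} := by
  intro y hy
  rw [mem_support, binomialPow, coeff_single_mul] at hy
  exact ⟨y - b • g, support_heval_subset_closure hS _ (right_ne_zero_of_mul hy), by abel⟩

lemma single_mul_one_add_mul_binomialPow_neg_one {a : ℝ} (ha : a ≠ 0) (hS : 0 < S.orderTop)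
    (g : Γ) : single g a * (1 + S) * binomialPow a g S (-1) = 1 := by
  calc single g a * (1 + S) * binomialPow a g S (-1)
      = single g a * single ((-1 : ℝ) • g) (a ^ (-1 : ℝ)) *
          heval S ((1 + X) * PowerSeries.binomialSeries ℝ (-1 : ℝ)) := by
        rw [heval_mul, map_add, map_one, heval_X S hS, binomialPow]
        ring
    _ = 1 := by
        rw [PowerSeries.one_add_X_mul_binomialSeries_neg_one, map_one, single_mul_single,
          neg_one_smul, add_neg_cancel, Real.rpow_neg_one, mul_inv_cancel₀ ha, mul_one,
          single_zero_one]

end BinomialPow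

end HahnSeries

open HahnSeries

/-- Binomial powers: if `A = a·g·(1+S)` with `a > 0`, `g = mag A`, and `supp S ⊆ μ⁺`
(so `μ` witnesses `A`), then for every `b ∈ ℝ` the binomial series
`A^b = a^b g^b ∑ C(b,j) S^j` is a well-defined Hahn series witnessed by `μ`, i.e. its
support lies in `b•g + μ*`; in particular for `b = -1` it is the multiplicative inverse
of `A`, witnessed by `μ`. -/
theorem stmt19 {Γ : Type*} [AddCommGroup Γ] [LinearOrder Γ] [IsOrderedAddMonoid Γ] [Module ℝ Γ]
    (μ : Finset Γ) (hμ : ∀ x ∈ μ, 0 < x)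
    (a : ℝ) (ha : 0 < a) (g : Γ) (S : HahnSeries Γ ℝ)
    (hS : S.support ⊆ addPlus (μ : Set Γ))
    (A : HahnSeries Γ ℝ) (hA : A = (HahnSeries.single g a) * (1 + S)) (b : ℝ) :
    ∃ T : HahnSeries Γ ℝ,
      (∀ x : Γ, T.coeff x =
        Real.rpow a b * ∑' j : ℕ, realChoose b j * (S ^ j).coeff (x - b • g)) ∧
      T.support ⊆ {y | ∃ p ∈ AddSubmonoid.closure (μ : Set Γ), y = b • g + p} ∧
      (b = -1 → A * T = 1) := by
  have hSpos : 0 < S.orderTop :=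
    zero_lt_orderTop_of_forall_mem_support_pos fun x hx => pos_of_mem_addPlus hμ (hS hx)
  have hclosure : AddSubmonoid.closure S.support ≤ AddSubmonoid.closure (μ : Set Γ) :=
    AddSubmonoid.closure_le.2 (hS.trans (addPlus_subset_closure _))
  refine ⟨binomialPow a g S b, coeff_binomialPow hSpos a g b, fun y hy => ?_, ?_⟩
  · obtain ⟨p, hp, rfl⟩ := support_binomialPow_subset hSpos a g b hy
    exact ⟨p, hclosure hp, rfl⟩
  · rintro rfl
    rw [hA]
    exact single_mul_one_add_mul_binomialPow_neg_one ha.ne' hSpos g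
end
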